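/- For 0 < |λ| ≤ 1/2, the matrix A = [[λ, 1],[0, λ]] cannot be written as PU + U*P^⊥ for any orthogonal projection P and unitary U on ℂ². -/
import Mathlib


open Matrix

/-- For `0 < |λ| ≤ 1/2`, the Jordan block `[[λ, 1],[0, λ]]` cannot be written as
`PU + U*P^⊥` with `P` an orthogonal projection and `U` a unitary on `ℂ²`. -/
theorem jordan_block_not_PU_form (l : ℂ) (hl0 : 0 < ‖l‖) (hl : ‖l‖ ≤ 1 / 2) :
    ¬ ∃ P U : Matrix (Fin 2) (Fin 2) ℂ,
        Pᴴ = P ∧ P * P = P ∧ Uᴴ * U = 1 ∧ U * Uᴴ = 1 ∧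
        !![l, 1; 0, l] = P * U + Uᴴ * (1 - P) := by
  rintro ⟨P, U, hPH, hP2, hU1, hU2, hA⟩
  have hl' : l ≠ 0 := by intro h; rw [h] at hl0; simp at hl0
  have hcl' : (starRingEnd ℂ) l ≠ 0 := by simpa using hl'
  have hkey : (1 - P) * (!![l, 1; 0, l]) * P = 0 := by
    have h0 : (1 - P) * P = 0 := by rw [sub_mul, one_mul, hP2, sub_self]
    have hexp : (1 - P) * (P * U + Uᴴ * (1 - P)) * P
        = ((1 - P) * P) * (U * P) + ((1 - P) * Uᴴ) * ((1 - P) * P) := by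
      noncomm_ring
    rw [← hA] at hexp
    rw [hexp, h0]
    simp
  have e00 := congrFun (congrFun hkey 0) 0
  have e01 := congrFun (congrFun hkey 0) 1
  have e10 := congrFun (congrFun hkey 1) 0
  have e11 := congrFun (congrFun hkey 1) 1
  have p00 := congrFun (congrFun hP2 0) 0
  have p01 := congrFun (congrFun hP2 0) 1
  have p11 := congrFun (congrFun hP2 1) 1
  have hh01 := congrFun (congrFun hPH 0) 1
  have hA00 := congrFun (congrFun hA 0) 0
  have hA01 := congrFun (congrFun hA 0) 1
  have hA11 := congrFun (congrFun hA 1) 1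
  have hu01 := congrFun (congrFun hU1 0) 1
  have hu00 := congrFun (congrFun hU1 0) 0
  have hu11 := congrFun (congrFun hU1 1) 1
  simp [Matrix.mul_apply, Fin.sum_univ_two, Matrix.sub_apply, Matrix.one_apply,
    Matrix.conjTranspose_apply, Matrix.add_apply] at e00 e01 e10 e11 p00 p01 p11 hh01 hA00 hA01 hA11 hu01 hu00 hu11
  -- consequences of invariance
  have h1 : P 1 0 * (1 - P 0 0) = 0 := by linear_combination e00 + l * p00
  have h2 : P 1 1 * (1 - P 0 0) = 0 := by linear_combination e01 + l * p01
  have h4 : P 1 0 * P 1 1 = 0 := by linear_combination -e11 - l * p11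
  by_cases hc : P 1 0 = 0
  · have hb : P 0 1 = 0 := by rw [← hh01, hc, map_zero]
    have ha : P 0 0 = 0 ∨ P 0 0 = 1 := by
      have h : P 0 0 * (P 0 0 - 1) = 0 := by
        linear_combination p00 - P 1 0 * hb
      rcases mul_eq_zero.mp h with h | h
      · exact Or.inl h
      · exact Or.inr (sub_eq_zero.mp h)
    have hd : P 1 1 = 0 ∨ P 1 1 = 1 := by
      have h : P 1 1 * (P 1 1 - 1) = 0 := by
        linear_combination p11 - P 0 1 * hc
      rcases mul_eq_zero.mp h with h | h
      · exact Or.inl h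
      · exact Or.inr (sub_eq_zero.mp h)
    rcases ha with ha | ha
    · -- a = 0 forces d = 0 (P = 0)
      have hd0 : P 1 1 = 0 := by
        rcases hd with hd | hd
        · exact hd
        · exfalso; rw [ha, hd] at h2; simp at h2
      simp [ha, hb, hc, hd0] at hA00 hA01
      -- hA00 : l = conj (U 0 0),  hA01 : 1 = conj (U 1 0)
      have hv00 : U 0 0 = (starRingEnd ℂ) l := by
        have := congrArg (starRingEnd ℂ) hA00
        simpa using this.symm
      have hv10 : U 1 0 = 1 := by
        have := congrArg (starRingEnd ℂ) hA01
        simpa using this.symm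
      rw [hv00, hv10] at hu00
      simp at hu00
      exact hl' hu00
    · rcases hd with hd | hd
      · -- a = 1, d = 0 : the main case
        simp [ha, hb, hc, hd] at hA00 hA01 hA11
        -- hA00 : l = U 0 0, hA01 : 1 = U 0 1 + conj (U 1 0), hA11 : l = conj (U 1 1)
        have c00 : (starRingEnd ℂ) l = (starRingEnd ℂ) (U 0 0) :=
          congrArg (starRingEnd ℂ) hA00
        have c11 : (starRingEnd ℂ) l = U 1 1 := by
          have := congrArg (starRingEnd ℂ) hA11
          simpa using this
        have : (starRingEnd ℂ) l = 0 := by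
          linear_combination hu01 + U 0 1 * c00 + (starRingEnd ℂ) (U 1 0) * c11
            + (starRingEnd ℂ) l * hA01
        exact hcl' this
      · -- a = 1, d = 1 : P = 1
        simp [ha, hb, hc, hd] at hA01 hA11
        -- hA01 : 1 = U 0 1, hA11 : l = U 1 1
        rw [← hA01, ← hA11] at hu11
        simp at hu11
        exact hl' hu11
  · -- P 1 0 ≠ 0
    have ha : P 0 0 = 1 := by
      rcases mul_eq_zero.mp h1 with h | h
      · exact absurd h hc
      · linear_combination -h
    have hd : P 1 1 = 0 := by
      rcases mul_eq_zero.mp h4 with h | h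
      · exact absurd h hc
      · exact h
    rw [ha, hd] at e10
    have : P 1 0 * P 1 0 = 0 := by linear_combination -e10
    exact hc (by simpa [mul_self_eq_zero] using this)
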